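/- Let L be a closed operator on a Hilbert space, N a self-adjoint operator with N ≥ 1, α > 0, and suppose Im⟨ψ, Lψ⟩ ≥ (α/2)⟨ψ, Nψ⟩ for all ψ in the domain, and let z with Im z ≤ 0 be in the resolvent set with R = (L - z)^{-1}. Then ‖N^{1/2} R ψ‖ ≤ √(2/α) · |⟨ψ, Rψ⟩|^{1/2} and ‖N^{1/2} R N^{1/2}‖ ≤ 2/α. -/

import Mathlib

/-!
Put `φ = Rψ`, so that `(L - z)φ = ψ`. Since `Im z ≤ 0`, the shift by `z` only increases the
imaginary part of the numerical range, and the dissipativity of `L` gives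
`(α/2)‖N^{1/2}φ‖² ≤ Im⟪φ, (L - z)φ⟫ = Im⟪φ, ψ⟫ ≤ |⟪ψ, Rψ⟫|`.
Applied to `N^{1/2}ψ` in place of `ψ`, and combined with Cauchy–Schwarz, this bounds
`(α/2)‖N^{1/2}RN^{1/2}ψ‖²` by `‖ψ‖ ‖N^{1/2}RN^{1/2}ψ‖`.
-/

namespace ContinuousLinearMap

variable {H : Type*} [NormedAddCommGroup H] [InnerProductSpace ℂ H]

theorem norm_sq_apply_eq_re_inner_mul_self [CompleteSpace H] {S : H →L[ℂ] H}
    (hS : IsSelfAdjoint S) (φ : H) : ‖S φ‖ ^ 2 = (inner ℂ φ ((S * S) φ)).re := by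
  have h := apply_norm_sq_eq_inner_adjoint_right S φ
  rwa [← star_eq_adjoint, hS.star_eq] at h

theorem im_inner_sub_smul_self (φ v : H) (z : ℂ) :
    (inner ℂ φ (v - z • φ)).im = (inner ℂ φ v).im - z.im * ‖φ‖ ^ 2 := by
  rw [inner_sub_right, inner_smul_right, inner_self_eq_norm_sq_to_K]
  simp [Complex.mul_im, ← Complex.ofReal_pow]

theorem mul_norm_sq_apply_le_norm_inner_of_dissipative {c : ℝ} {A L R : H →L[ℂ] H} {z : ℂ}
    (hdiss : ∀ ψ, c * ‖A ψ‖ ^ 2 ≤ (inner ℂ ψ (L ψ)).im) (hz : z.im ≤ 0)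
    (hR : (L - z • (1 : H →L[ℂ] H)) * R = 1) (ψ : H) :
    c * ‖A (R ψ)‖ ^ 2 ≤ ‖inner ℂ ψ (R ψ)‖ := by
  set φ := R ψ
  have hφ : L φ - z • φ = ψ := by simpa [φ] using congr($hR ψ)
  calc c * ‖A φ‖ ^ 2 ≤ (inner ℂ φ (L φ)).im := hdiss φ
    _ ≤ (inner ℂ φ (L φ)).im - z.im * ‖φ‖ ^ 2 := by nlinarith [sq_nonneg ‖φ‖]
    _ = (inner ℂ φ ψ).im := by rw [← im_inner_sub_smul_self, hφ]
    _ ≤ ‖inner ℂ φ ψ‖ := (le_abs_self _).trans (Complex.abs_im_le_norm _)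
    _ = ‖inner ℂ ψ φ‖ := norm_inner_symm _ _

theorem norm_mul_mul_self_le_inv [CompleteSpace H] {c : ℝ} (hc : 0 < c) {A R : H →L[ℂ] H}
    (hA : IsSelfAdjoint A) (hAR : ∀ ψ, c * ‖A (R ψ)‖ ^ 2 ≤ ‖inner ℂ ψ (R ψ)‖) :
    ‖A * R * A‖ ≤ c⁻¹ := by
  refine opNorm_le_bound _ (inv_nonneg.mpr hc.le) fun ψ => ?_
  set x := A (R (A ψ))
  have hx : c * ‖x‖ * ‖x‖ ≤ ‖ψ‖ * ‖x‖ :=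
    calc c * ‖x‖ * ‖x‖ = c * ‖x‖ ^ 2 := by ring
      _ ≤ ‖inner ℂ (A ψ) (R (A ψ))‖ := hAR (A ψ)
      _ = ‖inner ℂ ψ x‖ := by rw [hA.isSymmetric.apply_clm]
      _ ≤ ‖ψ‖ * ‖x‖ := norm_inner_le_norm _ _
  change ‖x‖ ≤ c⁻¹ * ‖ψ‖
  rcases (norm_nonneg x).eq_or_lt with h0 | hpos
  · rw [← h0]
    positivity
  · rw [inv_mul_eq_div, le_div_iff₀' hc]
    exact le_of_mul_le_mul_right hx hpos

end ContinuousLinearMap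

open ContinuousLinearMap in
theorem dissipative_smoothing_bound_general
    {H : Type*} [NormedAddCommGroup H] [InnerProductSpace ℂ H] [CompleteSpace H]
    (α : ℝ) (hα : 0 < α)
    (L N S : H →L[ℂ] H)
    (hS : IsSelfAdjoint S)
    (hSsq : S * S = N)
    (hnum : ∀ ψ : H, (α / 2) * (inner ℂ ψ (N ψ) : ℂ).re ≤ (inner ℂ ψ (L ψ) : ℂ).im)
    (z : ℂ) (hz : z.im ≤ 0)
    (R : H →L[ℂ] H)
    (hR₂ : (L - z • (1 : H →L[ℂ] H)) * R = 1) :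
    (∀ ψ : H, ‖S (R ψ)‖ ≤ Real.sqrt (2 / α) * Real.sqrt ‖(inner ℂ ψ (R ψ) : ℂ)‖)
    ∧ ‖S * R * S‖ ≤ 2 / α := by
  have hdiss : ∀ ψ, α / 2 * ‖S ψ‖ ^ 2 ≤ (inner ℂ ψ (L ψ)).im := fun ψ => by
    simpa only [norm_sq_apply_eq_re_inner_mul_self hS, hSsq] using hnum ψ
  have hSR := mul_norm_sq_apply_le_norm_inner_of_dissipative hdiss hz hR₂
  refine ⟨fun ψ => ?_, by simpa using norm_mul_mul_self_le_inv (by positivity) hS hSR⟩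
  rw [← Real.sqrt_mul (by positivity), Real.le_sqrt (norm_nonneg _) (by positivity),
    div_mul_eq_mul_div, le_div_iff₀' hα]
  linarith [hSR ψ]

/-- Proposition 4.1(2) of the paper: if `Im⟨ψ,Lψ⟩ ≥ (α/2)⟨ψ,Nψ⟩` with `N ≥ 1`, `Im z ≤ 0`,
and `R = (L-z)⁻¹`, then `‖N^{1/2}Rψ‖ ≤ √(2/α) |⟨ψ,Rψ⟩|^{1/2}` and `‖N^{1/2} R N^{1/2}‖ ≤ 2/α`,
where `S = N^{1/2}` is the nonnegative self-adjoint square root of `N`. -/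
theorem dissipative_smoothing_bound
    {H : Type*} [NormedAddCommGroup H] [InnerProductSpace ℂ H] [CompleteSpace H]
    (α : ℝ) (hα : 0 < α)
    (L N S : H →L[ℂ] H)
    (hN : IsSelfAdjoint N) (hS : IsSelfAdjoint S)
    (hSpos : ∀ ψ : H, 0 ≤ (inner ℂ ψ (S ψ) : ℂ).re)
    (hSsq : S * S = N)
    (hN1 : ∀ ψ : H, ‖ψ‖ ^ 2 ≤ (inner ℂ ψ (N ψ) : ℂ).re)
    (hnum : ∀ ψ : H, (α / 2) * (inner ℂ ψ (N ψ) : ℂ).re ≤ (inner ℂ ψ (L ψ) : ℂ).im)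
    (z : ℂ) (hz : z.im ≤ 0)
    (R : H →L[ℂ] H)
    (hR₁ : R * (L - z • (1 : H →L[ℂ] H)) = 1)
    (hR₂ : (L - z • (1 : H →L[ℂ] H)) * R = 1) :
    (∀ ψ : H, ‖S (R ψ)‖ ≤ Real.sqrt (2 / α) * Real.sqrt ‖(inner ℂ ψ (R ψ) : ℂ)‖)
    ∧ ‖S * R * S‖ ≤ 2 / α :=
  dissipative_smoothing_bound_general α hα L N S hS hSsq hnum z hz R hR₂
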